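/- If G=(V,E) is a sparse graph with |V| > 1 and max-tight decomposition {G_i=(V_i,E_i)}_{i∈I}, then there exists a marking m : Z → V for G such that the reduced graph G^m is sparse and the family {G_i^m}_{i∈I^m} is a max-tight decomposition for G^m. -/

import Mathlib

open scoped Classical

noncomputable section

/-- The squared distance function on `ℂ²`. -/
def sd (x y : ℂ × ℂ) : ℂ := (x.1 - y.1) ^ 2 + (x.2 - y.2) ^ 2

/-- Membership in the transformation group `T`. -/
def IsTransf (t : ℂ × ℂ → ℂ × ℂ) : Prop :=
  ∃ c s u v : ℂ, c ^ 2 + s ^ 2 = 1 ∧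
    ∀ x, t x = (c * x.1 - s * x.2 + u, s * x.1 + c * x.2 + v)

variable {α : Type*} [DecidableEq α]

/-- `(V, E)` is a finite simple undirected graph: edges are non-diagonal
unordered pairs with both endpoints in `V`. -/
def IsGraph (V : Finset α) (E : Finset (Sym2 α)) : Prop :=
  ∀ e ∈ E, ¬ e.IsDiag ∧ ∀ v ∈ e, v ∈ V

/-- `(V', E')` is a subgraph of `(V, E)`. -/
def IsSubgraph (V' : Finset α) (E' : Finset (Sym2 α))
    (V : Finset α) (E : Finset (Sym2 α)) : Prop :=
  IsGraph V' E' ∧ V' ⊆ V ∧ E' ⊆ E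

/-- A graph is sparse if every subgraph `(V', E')` with `|V'| ≥ 2`
satisfies `|E'| ≤ 2|V'| - 3`. -/
def IsSparse (V : Finset α) (E : Finset (Sym2 α)) : Prop :=
  IsGraph V E ∧ ∀ V' E', IsSubgraph V' E' V E → 2 ≤ V'.card →
    (E'.card : ℤ) ≤ 2 * V'.card - 3

/-- A graph is tight if it is sparse and `|V| = 1` or `|E| = 2|V| - 3`. -/
def IsTight (V : Finset α) (E : Finset (Sym2 α)) : Prop :=
  IsSparse V E ∧ (V.card = 1 ∨ (E.card : ℤ) = 2 * V.card - 3)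

/-- `(V', E')` is a max-tight subgraph of `(V, E)`. -/
def IsMaxTight (V' : Finset α) (E' : Finset (Sym2 α))
    (V : Finset α) (E : Finset (Sym2 α)) : Prop :=
  IsSubgraph V' E' V E ∧ IsTight V' E' ∧
    ∀ V'' E'', IsSubgraph V'' E'' V E → IsTight V'' E'' →
      V' ⊆ V'' → E' ⊆ E'' → V' = V'' ∧ E' = E''

/-- `{(Vi i, Ei i)}_{i ∈ I}` is a max-tight decomposition of `(V, E)`. -/
def IsMaxTightDecomp {I : Type*} (V : Finset α) (E : Finset (Sym2 α))
    (Vi : I → Finset α) (Ei : I → Finset (Sym2 α)) : Prop :=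
  (∀ i, IsMaxTight (Vi i) (Ei i) V E) ∧
  (∀ v ∈ V, ∃ i, v ∈ Vi i) ∧
  (∀ e ∈ E, ∃ i, e ∈ Ei i) ∧
  (∀ i j, i ≠ j → ∀ e, ¬ (e ∈ Ei i ∧ e ∈ Ei j))

/-- Extend a realization of `V` to all of `α` (by zero off `V`). -/
def extendR (V : Finset α) (r : ↥V → ℂ × ℂ) : α → ℂ × ℂ :=
  fun a => if h : a ∈ V then r ⟨a, h⟩ else 0

/-- The squared distance along an unordered pair of vertices. -/
def edgeVal (r : α → ℂ × ℂ) : Sym2 α → ℂ :=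
  Sym2.lift ⟨fun u v => sd (r u) (r v), fun u v => by simp only [sd]; ring⟩

/-- The edge map `E_G : (ℂ²)^V → ℂ^E`. -/
def edgeMap (V : Finset α) (E : Finset (Sym2 α)) (r : ↥V → ℂ × ℂ) :
    {e // e ∈ E} → ℂ :=
  fun e => edgeVal (extendR V r) e.1

/-- The set `E_G⁻¹(λ)` of `λ`-compatible realizations. -/
def fiber (V : Finset α) (E : Finset (Sym2 α)) (lam : {e // e ∈ E} → ℂ) :
    Set (↥V → ℂ × ℂ) :=
  {r | edgeMap V E r = lam}

/-- The set of equivalence classes of `S` under `r ∼ s ↔ ∃ t ∈ T, s = t ∘ r`. -/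
def TClasses {β : Type*} (S : Set (β → ℂ × ℂ)) : Set (Set (β → ℂ × ℂ)) :=
  {C | ∃ r ∈ S, C = {s | s ∈ S ∧ ∃ t, IsTransf t ∧ s = fun v => t (r v)}}

/-- The coordinates of a realization, as a point of affine space with
coordinate ring `ℂ[x_v, y_v : v ∈ β]`. -/
def coords {β : Type*} (r : β → ℂ × ℂ) : β × Fin 2 → ℂ :=
  fun p => if p.2 = 0 then (r p.1).1 else (r p.1).2

/-- The vanishing ideal of a set of realizations in `ℂ[x_v, y_v : v ∈ β]`. -/
def vanishingIdeal {β : Type*} (S : Set (β → ℂ × ℂ)) :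
    Ideal (MvPolynomial (β × Fin 2) ℂ) where
  carrier := {f | ∀ r ∈ S, MvPolynomial.eval (coords r) f = 0}
  add_mem' := by
    intro a b ha hb r hr
    simp only [Set.mem_setOf_eq] at ha hb ⊢
    simp [map_add, ha r hr, hb r hr]
  zero_mem' := by intro r hr; simp
  smul_mem' := by
    intro c f hf r hr
    simp only [Set.mem_setOf_eq] at hf ⊢
    simp [smul_eq_mul, map_mul, hf r hr]

end

noncomputable section

open scoped Classical

variable {α : Type*} [DecidableEq α]

/-- `E[v]`: the set of edges of `E` containing the vertex `v`. -/
def edgesAt (E : Finset (Sym2 α)) (v : α) : Finset (Sym2 α) :=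
  E.filter (fun e => v ∈ e)

/-- `(V, E)` is a 1-extension of `(V', E')` with respect to the vertex `v0`
and the edge `{v2, v3}`. -/
def Is1Ext (V : Finset α) (E : Finset (Sym2 α))
    (V' : Finset α) (E' : Finset (Sym2 α)) (v0 v2 v3 : α) : Prop :=
  ∃ v1, v0 ∉ V' ∧ v1 ∈ V' ∧ v2 ∈ V' ∧ v3 ∈ V' ∧
    v1 ≠ v2 ∧ v1 ≠ v3 ∧ v2 ≠ v3 ∧ s(v2, v3) ∈ E' ∧
    V = insert v0 V' ∧
    E = (E'.erase s(v2, v3)) ∪ {s(v0, v1), s(v0, v2), s(v0, v3)}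

/-- `m` is a marking for the sparse graph `(V, E)` with max-tight decomposition
`{(Vi i, Ei i)}_{i ∈ I}`, where `Z = {0, …, k-1}` with `1 ≤ k ≤ 4`. -/
def IsMarking {I : Type*} (V : Finset α) (E : Finset (Sym2 α))
    (Vi : I → Finset α) (Ei : I → Finset (Sym2 α)) (k : ℕ) (m : ℕ → α) : Prop :=
  1 ≤ k ∧ k ≤ 4 ∧ 1 < V.card ∧
  (∀ z ∈ Finset.range k, m z ∈ V) ∧
  Set.InjOn m ↑(Finset.range k) ∧
  edgesAt E (m 0) = ((Finset.range k).erase 0).image (fun z => s(m 0, m z)) ∧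
  (∀ i : I, k = 4 → (Finset.range k).image m ⊆ Vi i →
    ∃ (V' : Finset α) (E' : Finset (Sym2 α)), IsTight V' E' ∧
      Is1Ext (Vi i) (Ei i) V' E' (m 0) (m 2) (m 3))

/-- `V_i^m = V_i ∖ {m 0}`. -/
def Vm {I : Type*} (Vi : I → Finset α) (m : ℕ → α) (i : I) : Finset α :=
  (Vi i).erase (m 0)

/-- `E_i^m`: remove the edges at `m 0` and, in the 1-extension case, put the
edge `{m 2, m 3}` back in. -/
def Em {I : Type*} (Vi : I → Finset α) (Ei : I → Finset (Sym2 α))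
    (k : ℕ) (m : ℕ → α) (i : I) : Finset (Sym2 α) :=
  if k = 4 ∧ (Finset.range k).image m ⊆ Vi i then
    (Ei i).filter (fun e => m 0 ∉ e) ∪ {s(m 2, m 3)}
  else (Ei i).filter (fun e => m 0 ∉ e)

/-- `I^m = {i ∈ I : V_i ≠ {m 0} and |E_i[m 0]| ≠ 1}`. -/
def inIm {I : Type*} (Vi : I → Finset α) (Ei : I → Finset (Sym2 α))
    (m : ℕ → α) (i : I) : Prop :=
  Vi i ≠ {m 0} ∧ (edgesAt (Ei i) (m 0)).card ≠ 1

/-- The vertex set `V^m = ⋃_{i ∈ I^m} V_i^m` of the reduced graph `G^m`. -/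
def redV {I : Type*} [Fintype I] (Vi : I → Finset α) (Ei : I → Finset (Sym2 α))
    (m : ℕ → α) : Finset α :=
  (Finset.univ.filter (inIm Vi Ei m)).biUnion (Vm Vi m)

/-- The edge set `E^m = ⋃_{i ∈ I^m} E_i^m` of the reduced graph `G^m`. -/
def redE {I : Type*} [Fintype I] (Vi : I → Finset α) (Ei : I → Finset (Sym2 α))
    (k : ℕ) (m : ℕ → α) : Finset (Sym2 α) :=
  (Finset.univ.filter (inIm Vi Ei m)).biUnion (Em Vi Ei k m)

end

/-!
Pick a vertex `v` of degree at most three (the degrees sum to `2|E| ≤ 4|V| - 6`), put `m 0 = v`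
and list its neighbours as `m 1, …`. Deleting `v` from a component meeting it in `d` edges
changes `|E_i| - (2|V_i| - 3)` by `2 - d`, so components with `d = 2` stay tight and the one with
`d = 3` stays tight once `{m 2, m 3}` is put back. The reduced graph stays sparse as long as
`{m 2, m 3}` lies in no tight subgraph of `G - v`, and when `v` has degree three some pair of
its neighbours qualifies: tight subgraphs of `G - v` covering all three pairs glue to a tight
subgraph containing all three neighbours, and adding `v` with its three edges violates sparsity.
Maximality of the reduced components is inherited from `G`: a tight overgraph of `G_i^m` lifts,
by a 0- or 1-extension at `v`, to a tight overgraph of `G_i`.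
-/

section SparseGraphs

variable {α : Type*} {V W V₁ V₂ : Finset α} {E F E₁ E₂ : Finset (Sym2 α)}

theorem IsSubgraph.trans {V₃ : Finset α} {E₃ : Finset (Sym2 α)} (h₁₂ : IsSubgraph V₁ E₁ V₂ E₂)
    (h₂₃ : IsSubgraph V₂ E₂ V₃ E₃) : IsSubgraph V₁ E₁ V₃ E₃ :=
  ⟨h₁₂.1, h₁₂.2.1.trans h₂₃.2.1, h₁₂.2.2.trans h₂₃.2.2⟩

theorem IsSparse.mono (hS : IsSparse V E) (h : IsSubgraph W F V E) : IsSparse W F :=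
  ⟨h.1, fun V' E' h' => hS.2 V' E' (h'.trans h)⟩

theorem IsSparse.isTight (hS : IsSparse V E) (h : IsSubgraph W F V E)
    (hc : (F.card : ℤ) = 2 * W.card - 3) : IsTight W F :=
  ⟨hS.mono h, Or.inr hc⟩

theorem IsTight.card_eq (ht : IsTight W F) (h : 2 ≤ W.card) : (F.card : ℤ) = 2 * W.card - 3 :=
  ht.2.resolve_left (by omega)

theorem IsGraph.mem_of_mem (hG : IsGraph V E) {e : Sym2 α} (he : e ∈ E) {v : α} (hv : v ∈ e) :
    v ∈ V :=
  (hG e he).2 v hv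

theorem IsGraph.two_le_card (hG : IsGraph V E) {e : Sym2 α} (he : e ∈ E) : 2 ≤ V.card := by
  induction e using Sym2.ind with
  | _ x y =>
    have hxy : x ≠ y := by simpa using (hG _ he).1
    exact Finset.one_lt_card.2
      ⟨x, hG.mem_of_mem he (Sym2.mem_mk_left x y), y, hG.mem_of_mem he (Sym2.mem_mk_right x y), hxy⟩

theorem IsGraph.eq_empty_of_card_le_one (hG : IsGraph V E) (hV : V.card ≤ 1) : E = ∅ :=
  Finset.eq_empty_of_forall_notMem fun _ he => by have := hG.two_le_card he; omega

theorem IsTight.nonempty (ht : IsTight V E) : V.Nonempty := by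
  rw [← Finset.card_pos]
  by_contra h0
  have hE := ht.1.1.eq_empty_of_card_le_one (by omega)
  rcases ht.2 with h | h <;> simp_all

variable [DecidableEq α]

theorem IsSubgraph.union (h₁ : IsSubgraph V₁ E₁ V E) (h₂ : IsSubgraph V₂ E₂ V E) :
    IsSubgraph (V₁ ∪ V₂) (E₁ ∪ E₂) V E := by
  refine ⟨fun e he => ?_, Finset.union_subset h₁.2.1 h₂.2.1, Finset.union_subset h₁.2.2 h₂.2.2⟩
  rcases Finset.mem_union.1 he with he | he
  · exact ⟨(h₁.1 e he).1, fun v hv => Finset.mem_union_left _ (h₁.1.mem_of_mem he hv)⟩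
  · exact ⟨(h₂.1 e he).1, fun v hv => Finset.mem_union_right _ (h₂.1.mem_of_mem he hv)⟩

theorem IsGraph.inter (h₁ : IsGraph V₁ E₁) (h₂ : IsGraph V₂ E₂) : IsGraph (V₁ ∩ V₂) (E₁ ∩ E₂) :=
  fun e he => ⟨(h₁ e (Finset.mem_inter.1 he).1).1, fun _ hv =>
    Finset.mem_inter.2 ⟨h₁.mem_of_mem (Finset.mem_inter.1 he).1 hv,
      h₂.mem_of_mem (Finset.mem_inter.1 he).2 hv⟩⟩

theorem IsGraph.disjoint_of_card_inter_le_one (h₁ : IsGraph V₁ E₁) (h₂ : IsGraph V₂ E₂)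
    (h : (V₁ ∩ V₂).card ≤ 1) : Disjoint E₁ E₂ :=
  Finset.disjoint_iff_inter_eq_empty.2 ((h₁.inter h₂).eq_empty_of_card_le_one h)

theorem IsSparse.le_card_union (hS : IsSparse V E) (h₁ : IsSubgraph V₁ E₁ V E)
    (h₂ : IsSubgraph V₂ E₂ V E) (h : 2 ≤ (V₁ ∩ V₂).card) (hc₁ : 2 * (V₁.card : ℤ) - 3 ≤ E₁.card)
    (hc₂ : 2 * (V₂.card : ℤ) - 3 ≤ E₂.card) :
    2 * ((V₁ ∪ V₂).card : ℤ) - 3 ≤ (E₁ ∪ E₂).card := by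
  have hinter := hS.2 _ _ ⟨h₁.1.inter h₂.1, Finset.inter_subset_left.trans h₁.2.1,
    Finset.inter_subset_left.trans h₁.2.2⟩ h
  have hV := Finset.card_union_add_card_inter V₁ V₂
  have hE := Finset.card_union_add_card_inter E₁ E₂
  omega

theorem IsSparse.isTight_union (hS : IsSparse V E) (h₁ : IsSubgraph V₁ E₁ V E)
    (h₂ : IsSubgraph V₂ E₂ V E) (t₁ : IsTight V₁ E₁) (t₂ : IsTight V₂ E₂)
    (h : 2 ≤ (V₁ ∩ V₂).card) : IsTight (V₁ ∪ V₂) (E₁ ∪ E₂) := by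
  have h₁₂ := h₁.union h₂
  have hU : 2 ≤ (V₁ ∪ V₂).card :=
    h.trans (Finset.card_le_card (Finset.inter_subset_left.trans Finset.subset_union_left))
  have hc₁ := t₁.card_eq (h.trans (Finset.card_le_card Finset.inter_subset_left))
  have hc₂ := t₂.card_eq (h.trans (Finset.card_le_card Finset.inter_subset_right))
  have hge := hS.le_card_union h₁ h₂ h hc₁.ge hc₂.ge
  exact hS.isTight h₁₂ (le_antisymm (hS.2 _ _ h₁₂ hU) hge)

theorem IsSparse.eq_of_isMaxTight (hS : IsSparse V E) (h₁ : IsMaxTight V₁ E₁ V E)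
    (h₂ : IsMaxTight V₂ E₂ V E) (h : 2 ≤ (V₁ ∩ V₂).card) : V₁ = V₂ ∧ E₁ = E₂ := by
  have hU := h₁.1.union h₂.1
  have tU := hS.isTight_union h₁.1 h₂.1 h₁.2.1 h₂.2.1 h
  obtain ⟨hV₁, hE₁⟩ := h₁.2.2 _ _ hU tU Finset.subset_union_left Finset.subset_union_left
  obtain ⟨hV₂, hE₂⟩ := h₂.2.2 _ _ hU tU Finset.subset_union_right Finset.subset_union_right
  exact ⟨hV₁.trans hV₂.symm, hE₁.trans hE₂.symm⟩

theorem IsMaxTightDecomp.eq_of_mem_of_mem {I : Type*} {Vi : I → Finset α}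
    {Ei : I → Finset (Sym2 α)} (hS : IsSparse V E) (hD : IsMaxTightDecomp V E Vi Ei) {i j : I}
    {x y : α} (hxy : x ≠ y) (hxi : x ∈ Vi i) (hyi : y ∈ Vi i) (hxj : x ∈ Vi j) (hyj : y ∈ Vi j) :
    i = j := by
  by_contra hij
  have h2 : 2 ≤ (Vi i ∩ Vi j).card := Finset.one_lt_card.2
    ⟨x, Finset.mem_inter.2 ⟨hxi, hxj⟩, y, Finset.mem_inter.2 ⟨hyi, hyj⟩, hxy⟩
  obtain ⟨-, hE⟩ := hS.eq_of_isMaxTight (hD.1 i) (hD.1 j) h2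
  have hc := (hD.1 i).2.1.card_eq (h2.trans (Finset.card_le_card Finset.inter_subset_left))
  obtain ⟨e, he⟩ : (Ei i).Nonempty := Finset.card_pos.1 (by omega)
  exact hD.2.2.2 i j hij e ⟨he, hE ▸ he⟩

theorem IsSparse.mem_of_isTight (hS : IsSparse V E) (hW : IsSubgraph W F V E) (ht : IsTight W F)
    (hW2 : 2 ≤ W.card) {e : Sym2 α} (he : e ∈ E) (heW : ∀ v ∈ e, v ∈ W) : e ∈ F := by
  by_contra heF
  have hsub : IsSubgraph W (insert e F) V E :=
    ⟨fun e' he' => (Finset.mem_insert.1 he').elim (fun h => h ▸ ⟨(hS.1 e he).1, heW⟩) (hW.1 e'),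
      hW.2.1, Finset.insert_subset he hW.2.2⟩
  have := hS.2 _ _ hsub hW2
  rw [Finset.card_insert_of_notMem heF] at this
  have := ht.card_eq hW2
  omega

theorem card_filter_add_card_edgesAt (F : Finset (Sym2 α)) (v : α) :
    (F.filter (fun e => v ∉ e)).card + (edgesAt F v).card = F.card := by
  rw [add_comm, edgesAt]
  exact Finset.card_filter_add_card_filter_not _

theorem edgesAt_mono (h : F ⊆ E) (v : α) : edgesAt F v ⊆ edgesAt E v :=
  Finset.filter_subset_filter _ h

theorem filter_union_edgesAt (F : Finset (Sym2 α)) (v : α) :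
    F.filter (fun e => v ∉ e) ∪ edgesAt F v = F := by
  rw [Finset.union_comm]
  exact Finset.filter_union_filter_not_eq _ _

theorem IsGraph.isSubgraph_erase (hG : IsGraph V E) (v : α) :
    IsSubgraph (V.erase v) (E.filter (fun e => v ∉ e)) V E := by
  refine ⟨fun e he => ?_, Finset.erase_subset _ _, Finset.filter_subset _ _⟩
  obtain ⟨he, hve⟩ := Finset.mem_filter.1 he
  exact ⟨(hG e he).1, fun u hu =>
    Finset.mem_erase.2 ⟨fun h => hve (h ▸ hu), hG.mem_of_mem he hu⟩⟩

theorem IsTight.card_edgesAt_eq_one (ht : IsTight V E) {v : α} (hv : v ∈ V) (h2 : V.card = 2) :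
    (edgesAt E v).card = 1 := by
  have hempty := (ht.1.1.isSubgraph_erase v).1.eq_empty_of_card_le_one
    (by rw [Finset.card_erase_of_mem hv]; omega)
  have := card_filter_add_card_edgesAt E v
  have := ht.card_eq h2.ge
  rw [hempty, Finset.card_empty] at *
  omega

theorem IsTight.two_le_card_edgesAt (ht : IsTight V E) {v : α} (hv : v ∈ V) (h3 : 3 ≤ V.card) :
    2 ≤ (edgesAt E v).card := by
  have hle := ht.1.2 _ _ (ht.1.1.isSubgraph_erase v) (by rw [Finset.card_erase_of_mem hv]; omega)
  rw [Finset.card_erase_of_mem hv] at hle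
  have := card_filter_add_card_edgesAt E v
  have := ht.card_eq (by omega)
  push_cast [Nat.cast_sub (by omega : 1 ≤ V.card)] at hle
  omega

theorem IsTight.three_le_card (ht : IsTight W F) {v : α} (hv : v ∈ W) (hW : W ≠ {v})
    (hd : (edgesAt F v).card ≠ 1) : 3 ≤ W.card := by
  have h1 : W.card ≠ 1 := fun h1 => by
    obtain ⟨a, rfl⟩ := Finset.card_eq_one.1 h1
    rw [Finset.mem_singleton.1 hv] at hW
    exact hW rfl
  have h2 : W.card ≠ 2 := fun h2 => hd (ht.card_edgesAt_eq_one hv h2)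
  have := Finset.card_pos.2 ⟨v, hv⟩
  omega

theorem IsSubgraph.insert_vertex (hG : IsGraph V E) (hW : IsSubgraph W F V E) {v : α} (hv : v ∈ V)
    {A : Finset (Sym2 α)} (hA : A ⊆ E) (hAW : ∀ e ∈ A, ∀ u ∈ e, u ∈ insert v W) :
    IsSubgraph (insert v W) (F ∪ A) V E := by
  refine ⟨fun e he => ?_, Finset.insert_subset hv hW.2.1, Finset.union_subset hW.2.2 hA⟩
  rcases Finset.mem_union.1 he with he | he
  · exact ⟨(hW.1 e he).1, fun u hu => Finset.mem_insert_of_mem (hW.1.mem_of_mem he hu)⟩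
  · exact ⟨(hG e (hA he)).1, hAW e he⟩

theorem IsGraph.card_union_of_forall_mem (hW : IsGraph W F) {v : α} (hv : v ∉ W)
    {A : Finset (Sym2 α)} (hA : ∀ e ∈ A, v ∈ e) : (F ∪ A).card = F.card + A.card :=
  Finset.card_union_of_disjoint
    (Finset.disjoint_left.2 fun e heF heA => hv (hW.mem_of_mem heF (hA e heA)))

theorem filter_union_of_forall_mem {v : α} {A : Finset (Sym2 α)} (hF : ∀ e ∈ F, v ∉ e)
    (hA : ∀ e ∈ A, v ∈ e) : (F ∪ A).filter (fun e => v ∉ e) = F := by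
  rw [Finset.filter_union, Finset.filter_true_of_mem hF,
    Finset.filter_false_of_mem fun e he => not_not.2 (hA e he), Finset.union_empty]

theorem IsSparse.card_add_card_le (hS : IsSparse V E) (hW : IsSubgraph W F V E)
    (hne : W.Nonempty) {v : α} (hv : v ∈ V) (hvW : v ∉ W) {A : Finset (Sym2 α)} (hA : A ⊆ E)
    (hAv : ∀ e ∈ A, v ∈ e) (hAW : ∀ e ∈ A, ∀ u ∈ e, u ∈ insert v W) :
    (F.card : ℤ) + A.card ≤ 2 * W.card - 1 := by
  have := hS.2 _ _ (hW.insert_vertex hS.1 hv hA hAW)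
    (by rw [Finset.card_insert_of_notMem hvW]; have := hne.card_pos; omega)
  rw [hW.1.card_union_of_forall_mem hvW hAv, Finset.card_insert_of_notMem hvW] at this
  push_cast at this
  omega

theorem IsSparse.isTight_insert (hS : IsSparse V E) (hW : IsSubgraph W F V E) {v : α}
    (hv : v ∈ V) (hvW : v ∉ W) {A : Finset (Sym2 α)} (hA : A ⊆ E) (hAv : ∀ e ∈ A, v ∈ e)
    (hAW : ∀ e ∈ A, ∀ u ∈ e, u ∈ insert v W) (hc : (F.card : ℤ) + A.card = 2 * W.card - 1) :
    IsSubgraph (insert v W) (F ∪ A) V E ∧ IsTight (insert v W) (F ∪ A) := by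
  have hsub := hW.insert_vertex hS.1 hv hA hAW
  refine ⟨hsub, hS.isTight hsub ?_⟩
  rw [hW.1.card_union_of_forall_mem hvW hAv, Finset.card_insert_of_notMem hvW]
  push_cast
  omega

theorem IsSparse.card_le_of_three_neighbors (hS : IsSparse V E) (hW : IsSubgraph W F V E)
    {v a b c : α} (hvW : v ∉ W) (ha : a ∈ W) (hb : b ∈ W) (hc : c ∈ W) (hab : a ≠ b) (hac : a ≠ c)
    (hbc : b ≠ c) (hva : s(v, a) ∈ E) (hvb : s(v, b) ∈ E) (hvc : s(v, c) ∈ E) :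
    (F.card : ℤ) ≤ 2 * W.card - 4 := by
  have hA : ({s(v, a), s(v, b), s(v, c)} : Finset (Sym2 α)).card = 3 :=
    Finset.card_eq_three.2 ⟨_, _, _, mt Sym2.congr_right.1 hab, mt Sym2.congr_right.1 hac,
      mt Sym2.congr_right.1 hbc, rfl⟩
  have := hS.card_add_card_le hW ⟨a, ha⟩ (hS.1.mem_of_mem hva (Sym2.mem_mk_left v a)) hvW
    (A := {s(v, a), s(v, b), s(v, c)}) (by simp [Finset.insert_subset_iff, hva, hvb, hvc])
    (by simp) (by
      simp only [Finset.mem_insert, Finset.mem_singleton]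
      rintro e (rfl | rfl | rfl) u hu <;> rcases Sym2.mem_iff.1 hu with rfl | rfl <;> simp [*])
  omega

end SparseGraphs

section Marking

variable {α : Type*} [DecidableEq α] {V : Finset α} {E : Finset (Sym2 α)}

def IsBlocked (V : Finset α) (E : Finset (Sym2 α)) (v x y : α) : Prop :=
  ∃ W F, IsSubgraph W F V E ∧ IsTight W F ∧ v ∉ W ∧ x ∈ W ∧ y ∈ W

theorem IsSparse.not_isBlocked_or (hS : IsSparse V E) {v a b c : α} (hab : a ≠ b) (hac : a ≠ c)
    (hbc : b ≠ c) (hva : s(v, a) ∈ E) (hvb : s(v, b) ∈ E) (hvc : s(v, c) ∈ E) :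
    ¬ IsBlocked V E v b c ∨ ¬ IsBlocked V E v a c ∨ ¬ IsBlocked V E v a b := by
  by_contra! h
  obtain ⟨⟨W₁, F₁, h₁, t₁, hv₁, hb₁, hc₁⟩, ⟨W₂, F₂, h₂, t₂, hv₂, ha₂, hc₂⟩,
    ⟨W₃, F₃, h₃, t₃, hv₃, ha₃, hb₃⟩⟩ := h
  have hF₁ := t₁.card_eq (Finset.one_lt_card.2 ⟨b, hb₁, c, hc₁, hbc⟩)
  have hF₂ := t₂.card_eq (Finset.one_lt_card.2 ⟨a, ha₂, c, hc₂, hac⟩)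
  have hF₃ := t₃.card_eq (Finset.one_lt_card.2 ⟨a, ha₃, b, hb₃, hab⟩)
  have three := fun {W F} (hW : IsSubgraph W F V E) (hvW : v ∉ W) (ha : a ∈ W) (hb : b ∈ W)
    (hc : c ∈ W) => hS.card_le_of_three_neighbors hW hvW ha hb hc hab hac hbc hva hvb hvc
  -- two of the blocking subgraphs sharing two vertices glue to a tight one containing `a, b, c`
  have glue : ∀ {W F W' F'}, IsSubgraph W F V E → IsSubgraph W' F' V E →
      (F.card : ℤ) = 2 * W.card - 3 → (F'.card : ℤ) = 2 * W'.card - 3 → v ∉ W → v ∉ W' →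
      a ∈ W ∪ W' → b ∈ W ∪ W' → c ∈ W ∪ W' → (W ∩ W').card ≤ 1 := by
    intro W F W' F' hW hW' hF hF' hvW hvW' ha hb hc
    by_contra! h2
    have := hS.le_card_union hW hW' h2 hF.ge hF'.ge
    have := three (hW.union hW') (by simp [hvW, hvW']) ha hb hc
    omega
  have i₁₂ := glue h₁ h₂ hF₁ hF₂ hv₁ hv₂ (by simp [ha₂]) (by simp [hb₁]) (by simp [hc₁])
  have i₁₃ := glue h₁ h₃ hF₁ hF₃ hv₁ hv₃ (by simp [ha₃]) (by simp [hb₁]) (by simp [hc₁])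
  have i₂₃ := glue h₂ h₃ hF₂ hF₃ hv₂ hv₃ (by simp [ha₂]) (by simp [hb₃]) (by simp [hc₂])
  -- so any two share one vertex and no edge, and the union of all three has `2|W| - 3` edges
  have hE : (F₁ ∪ F₂ ∪ F₃).card = F₁.card + F₂.card + F₃.card := by
    rw [Finset.card_union_of_disjoint (Finset.disjoint_union_left.2
        ⟨h₁.1.disjoint_of_card_inter_le_one h₃.1 i₁₃, h₂.1.disjoint_of_card_inter_le_one h₃.1 i₂₃⟩),
      Finset.card_union_of_disjoint (h₁.1.disjoint_of_card_inter_le_one h₂.1 i₁₂)]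
  have hV₁₂ := Finset.card_union_add_card_inter W₁ W₂
  have hV := Finset.card_union_add_card_inter (W₁ ∪ W₂) W₃
  have : 1 ≤ (W₁ ∩ W₂).card := Finset.card_pos.2 ⟨c, Finset.mem_inter.2 ⟨hc₁, hc₂⟩⟩
  have : 2 ≤ ((W₁ ∪ W₂) ∩ W₃).card := Finset.one_lt_card.2
    ⟨a, by simp [ha₂, ha₃], b, by simp [hb₁, hb₃], hab⟩
  have := three ((h₁.union h₂).union h₃) (by simp [hv₁, hv₂, hv₃]) (by simp [ha₂])
    (by simp [hb₁]) (by simp [hc₁])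
  omega

theorem IsGraph.sum_card_edgesAt (hG : IsGraph V E) :
    ∑ v ∈ V, (edgesAt E v).card = 2 * E.card := by
  have := Finset.sum_card_bipartiteAbove_eq_sum_card_bipartiteBelow (s := V) (t := E)
    (fun v e => v ∈ e)
  simp only [Finset.bipartiteAbove, Finset.bipartiteBelow] at this
  unfold edgesAt
  rw [this, mul_comm, ← smul_eq_mul, ← Finset.sum_const]
  refine Finset.sum_congr rfl fun e he => ?_
  rw [← Sym2.card_toFinset_of_not_isDiag e (hG e he).1]
  congr 1
  ext v
  simpa using fun hv => hG.mem_of_mem he hv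

theorem IsSparse.exists_card_edgesAt_le_three (hS : IsSparse V E) (hV : 1 < V.card) :
    ∃ v ∈ V, (edgesAt E v).card ≤ 3 := by
  have hE := hS.2 V E ⟨hS.1, subset_rfl, subset_rfl⟩ hV
  have hsum : ∑ v ∈ V, (edgesAt E v).card < ∑ _v ∈ V, 4 := by
    rw [hS.1.sum_card_edgesAt, Finset.sum_const, smul_eq_mul]
    omega
  obtain ⟨v, hv, hlt⟩ := Finset.exists_lt_of_sum_lt hsum
  exact ⟨v, hv, by omega⟩

theorem IsGraph.edgesAt_eq_image (hG : IsGraph V E) (v : α) :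
    edgesAt E v = (V.filter (fun w => s(v, w) ∈ E)).image (fun w => s(v, w)) := by
  ext e
  simp only [edgesAt, Finset.mem_filter, Finset.mem_image]
  constructor
  · rintro ⟨he, hve⟩
    obtain ⟨w, rfl⟩ := Sym2.mem_iff_exists.1 hve
    exact ⟨w, ⟨hG.mem_of_mem he (Sym2.mem_mk_right v w), he⟩, rfl⟩
  · rintro ⟨w, ⟨-, he⟩, rfl⟩
    exact ⟨he, Sym2.mem_mk_left v w⟩

theorem IsSparse.exists_neighbor_list (hS : IsSparse V E) {v : α}
    (hdeg : (edgesAt E v).card ≤ 3) :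
    ∃ ws : List α, (∀ w ∈ ws, w ∈ V) ∧ (v :: ws).Nodup ∧ ws.length ≤ 3 ∧
      edgesAt E v = (ws.map (fun w => s(v, w))).toFinset ∧
      ∀ a b c, ws = [a, b, c] → ¬ IsBlocked V E v b c := by
  have hN := hS.1.edgesAt_eq_image v
  set N := V.filter (fun w => s(v, w) ∈ E)
  have hvN : v ∉ N := fun h => (hS.1 _ (Finset.mem_filter.1 h).2).1 (Sym2.mk_isDiag_iff.2 rfl)
  have hNcard : N.card ≤ 3 := by
    rwa [hN, Finset.card_image_of_injective _ fun _ _ => Sym2.congr_right.1] at hdeg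
  obtain ⟨ws, hnd, hws, hunbl⟩ : ∃ ws : List α, ws.Nodup ∧ ws.toFinset = N ∧
      ∀ a b c, ws = [a, b, c] → ¬ IsBlocked V E v b c := by
    by_cases h3 : N.card = 3
    · obtain ⟨a, b, c, hab, hac, hbc, hN3⟩ := Finset.card_eq_three.1 h3
      have hE : ∀ w ∈ N, s(v, w) ∈ E := fun w hw => (Finset.mem_filter.1 hw).2
      rcases hS.not_isBlocked_or hab hac hbc (hE a (by simp [hN3])) (hE b (by simp [hN3]))
        (hE c (by simp [hN3])) with h | h | h
      · exact ⟨[a, b, c], by simp [*], by simp [hN3], by simp_all⟩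
      · exact ⟨[b, a, c], by simp [*, Ne.symm hab], by rw [hN3]; ext; simp; tauto, by simp_all⟩
      · exact ⟨[c, a, b], by simp [*, Ne.symm hac, Ne.symm hbc], by rw [hN3]; ext; simp; tauto,
          by simp_all⟩
    · refine ⟨N.toList, N.nodup_toList, N.toList_toFinset, fun a b c h => (h3 ?_).elim⟩
      simpa using congrArg List.length h
  refine ⟨ws, fun w hw => ?_, List.nodup_cons.2 ⟨fun h => hvN (hws ▸ List.mem_toFinset.2 h), hnd⟩,
    ?_, ?_, hunbl⟩
  · exact (Finset.mem_filter.1 (hws ▸ List.mem_toFinset.2 hw)).1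
  · rwa [← List.toFinset_card_of_nodup hnd, hws]
  · rw [hN, ← hws]
    ext e
    simp

/-- `m 2, m 3` are chosen unblocked so that putting `{m 2, m 3}` back keeps `G^m` sparse. -/
structure IsAdmissibleMarking (V : Finset α) (E : Finset (Sym2 α)) (k : ℕ) (m : ℕ → α) :
    Prop where
  one_le : 1 ≤ k
  le_four : k ≤ 4
  mem : ∀ z ∈ Finset.range k, m z ∈ V
  injOn : Set.InjOn m ↑(Finset.range k)
  edgesAt_eq : edgesAt E (m 0) = ((Finset.range k).erase 0).image (fun z => s(m 0, m z))
  not_isBlocked : k = 4 → ¬ IsBlocked V E (m 0) (m 2) (m 3)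

theorem isAdmissibleMarking_of_list {v : α} {ws : List α} (hv : v ∈ V) (hws : ∀ w ∈ ws, w ∈ V)
    (hnd : (v :: ws).Nodup) (hlen : ws.length ≤ 3)
    (hE : edgesAt E v = (ws.map (fun w => s(v, w))).toFinset)
    (hunbl : ∀ a b c, ws = [a, b, c] → ¬ IsBlocked V E v b c) :
    IsAdmissibleMarking V E (ws.length + 1) (fun z => (v :: ws).getD z v) where
  one_le := by omega
  le_four := by omega
  mem z hz := by
    rw [List.getD_eq_getElem _ _ (by simpa using hz)]
    rcases List.mem_cons.1 (List.getElem_mem _) with h | h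
    · exact h ▸ hv
    · exact hws _ h
  injOn x hx y hy h := by
    simp only [Finset.coe_range, Set.mem_Iio] at hx hy h
    rwa [List.getD_eq_getElem _ _ (by simpa using hx), List.getD_eq_getElem _ _ (by simpa using hy),
      hnd.getElem_inj_iff] at h
  edgesAt_eq := by
    rw [List.getD_cons_zero, hE]
    ext e
    simp only [List.mem_toFinset, List.mem_map, Finset.mem_image, Finset.mem_erase,
      Finset.mem_range]
    constructor
    · rintro ⟨w, hw, rfl⟩
      obtain ⟨i, hi, rfl⟩ := List.mem_iff_getElem.1 hw
      exact ⟨i + 1, ⟨by omega, by omega⟩, by simp [hi]⟩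
    · rintro ⟨z, ⟨hz0, hz⟩, rfl⟩
      obtain ⟨i, rfl⟩ := Nat.exists_eq_succ_of_ne_zero hz0
      exact ⟨_, List.getElem_mem (by omega : i < ws.length),
        by simp [List.getElem?_eq_getElem (show i < ws.length by omega)]⟩
  not_isBlocked h := by
    obtain ⟨a, b, c, rfl⟩ := List.length_eq_three.1 (by omega : ws.length = 3)
    exact hunbl a b c rfl

end Marking

section Reduction

variable {α : Type*} [DecidableEq α] {I : Type*} {V : Finset α} {E : Finset (Sym2 α)}
  {Vi : I → Finset α} {Ei : I → Finset (Sym2 α)} {k : ℕ} {m : ℕ → α}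

def RestoresEdge (Vi : I → Finset α) (k : ℕ) (m : ℕ → α) (i : I) : Prop :=
  k = 4 ∧ (Finset.range k).image m ⊆ Vi i

theorem RestoresEdge.mem {i : I} (h : RestoresEdge Vi k m i) {z : ℕ} (hz : z < k) : m z ∈ Vi i :=
  h.2 (Finset.mem_image_of_mem m (Finset.mem_range.2 hz))

theorem Em_of_restoresEdge {i : I} (h : RestoresEdge Vi k m i) :
    Em Vi Ei k m i = insert s(m 2, m 3) ((Ei i).filter (fun e => m 0 ∉ e)) :=
  (if_pos h).trans ((Finset.union_comm _ _).trans (Finset.insert_eq _ _).symm)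

theorem Em_of_not_restoresEdge {i : I} (h : ¬ RestoresEdge Vi k m i) :
    Em Vi Ei k m i = (Ei i).filter (fun e => m 0 ∉ e) :=
  if_neg h

theorem three_le_card_of_inIm (hD : IsMaxTightDecomp V E Vi Ei) {i : I} (hi : inIm Vi Ei m i)
    (h0 : m 0 ∈ Vi i) : 3 ≤ (Vi i).card :=
  (hD.1 i).2.1.three_le_card h0 hi.1 hi.2

theorem Vm_nonempty (hD : IsMaxTightDecomp V E Vi Ei) {i : I} (hi : inIm Vi Ei m i) :
    (Vm Vi m i).Nonempty := by
  rw [Finset.nonempty_iff_ne_empty, Vm, Ne, Finset.erase_eq_empty_iff, not_or]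
  exact ⟨(hD.1 i).2.1.nonempty.ne_empty, hi.1⟩

theorem Vi_subset_insert {i : I} {W : Finset α} (h : Vm Vi m i ⊆ W) : Vi i ⊆ insert (m 0) W :=
  (Finset.insert_erase_subset _ _).trans (Finset.insert_subset_insert _ h)

theorem eq_of_Vm_subset_Vm (hS : IsSparse V E) (hD : IsMaxTightDecomp V E Vi Ei) {i j : I}
    (hi : inIm Vi Ei m i) (hVm : Vm Vi m i ⊆ Vm Vi m j) (hj : 2 ≤ (Vm Vi m j).card) : i = j := by
  by_cases h2 : 2 ≤ (Vm Vi m i).card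
  · obtain ⟨x, hx, y, hy, hxy⟩ := Finset.one_lt_card.1 h2
    exact hD.eq_of_mem_of_mem hS hxy (Finset.mem_of_mem_erase hx) (Finset.mem_of_mem_erase hy)
      (Finset.mem_of_mem_erase (hVm hx)) (Finset.mem_of_mem_erase (hVm hy))
  -- otherwise `G_i` is a single vertex other than `m 0`, and `G_j` would swallow it
  have h0 : m 0 ∉ Vi i := fun h0 => h2 (by
    have := three_le_card_of_inIm hD hi h0
    rw [Vm, Finset.card_erase_of_mem h0]
    omega)
  have hVi : Vm Vi m i = Vi i := Finset.erase_eq_of_notMem h0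
  have hEi := (hD.1 i).1.1.eq_empty_of_card_le_one (by rw [← hVi]; omega)
  have hij := ((hD.1 i).2.2 _ _ (hD.1 j).1 (hD.1 j).2.1
    (hVi ▸ hVm.trans (Finset.erase_subset _ _)) (hEi ▸ Finset.empty_subset _)).1
  have : (Vm Vi m j).card ≤ (Vm Vi m i).card := by
    rw [hVi, hij]
    exact Finset.card_le_card (Finset.erase_subset _ _)
  omega

theorem Vm_Em_of_notMem (hD : IsMaxTightDecomp V E Vi Ei) {i : I} (h0 : m 0 ∉ Vi i) :
    Vm Vi m i = Vi i ∧ Em Vi Ei k m i = Ei i := by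
  refine ⟨Finset.erase_eq_of_notMem h0, ?_⟩
  rw [Em_of_not_restoresEdge fun h => h0 (h.mem (by rw [h.1]; omega))]
  exact Finset.filter_true_of_mem fun e he h => h0 ((hD.1 i).1.1.mem_of_mem he h)

namespace IsAdmissibleMarking

theorem ne (hm : IsAdmissibleMarking V E k m) {z z' : ℕ} (hz : z < k) (hz' : z' < k)
    (h : z ≠ z') : m z ≠ m z' :=
  fun h' => h (hm.injOn (by simpa using hz) (by simpa using hz') h')

theorem mem_edgesAt (hm : IsAdmissibleMarking V E k m) {z : ℕ} (h1 : 1 ≤ z) (hz : z < k) :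
    s(m 0, m z) ∈ edgesAt E (m 0) := by
  rw [hm.edgesAt_eq]
  exact Finset.mem_image_of_mem _ (Finset.mem_erase.2 ⟨by omega, Finset.mem_range.2 hz⟩)

theorem card_edgesAt (hm : IsAdmissibleMarking V E k m) : (edgesAt E (m 0)).card = k - 1 := by
  rw [hm.edgesAt_eq, Finset.card_image_of_injOn, Finset.card_erase_of_mem
    (Finset.mem_range.2 hm.one_le), Finset.card_range]
  intro z hz z' hz' h
  simp only [Finset.coe_erase, Finset.coe_range, Set.mem_sdiff, Set.mem_Iio] at hz hz'
  exact hm.injOn (by simpa using hz.1) (by simpa using hz'.1) (Sym2.congr_right.1 h)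

theorem edgesAt_eq_of_four (hm : IsAdmissibleMarking V E k m) (h4 : k = 4) :
    edgesAt E (m 0) = {s(m 0, m 1), s(m 0, m 2), s(m 0, m 3)} := by
  rw [hm.edgesAt_eq, h4, show (Finset.range 4).erase 0 = {1, 2, 3} by decide]
  simp

theorem mem_insert_of_mem_edgesAt (hm : IsAdmissibleMarking V E k m) {S : Finset α}
    (hS : ∀ z, 1 ≤ z → z < k → m z ∈ S) {e : Sym2 α} (he : e ∈ edgesAt E (m 0)) {u : α}
    (hu : u ∈ e) : u ∈ insert (m 0) S := by
  rw [hm.edgesAt_eq] at he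
  obtain ⟨z, hz, rfl⟩ := Finset.mem_image.1 he
  obtain ⟨hz0, hzk⟩ := Finset.mem_erase.1 hz
  rcases Sym2.mem_iff.1 hu with rfl | rfl
  · exact Finset.mem_insert_self _ _
  · exact Finset.mem_insert_of_mem (hS z (by omega) (Finset.mem_range.1 hzk))

theorem card_le_of_mem (hm : IsAdmissibleMarking V E k m) (hS : IsSparse V E) (h4 : k = 4)
    {W : Finset α} {F : Finset (Sym2 α)} (hW : IsSubgraph W F V E) (h0 : m 0 ∉ W)
    (h2 : m 2 ∈ W) (h3 : m 3 ∈ W) : (F.card : ℤ) ≤ 2 * W.card - 4 := by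
  have hW2 : 2 ≤ W.card :=
    Finset.one_lt_card.2 ⟨_, h2, _, h3, hm.ne (by omega) (by omega) (by omega)⟩
  by_contra! hlt
  exact hm.not_isBlocked h4
    ⟨W, F, hW, hS.isTight hW (le_antisymm (hS.2 W F hW hW2) (by omega)), h0, h2, h3⟩

theorem edge_notMem (hm : IsAdmissibleMarking V E k m) (hS : IsSparse V E) (h4 : k = 4) :
    s(m 2, m 3) ∉ E := by
  intro he
  have h23 := hm.ne (z := 2) (z' := 3) (by omega) (by omega) (by omega)
  have hsub : IsSubgraph {m 2, m 3} {s(m 2, m 3)} V E :=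
    ⟨by simpa [IsGraph] using h23, by
      simp [Finset.insert_subset_iff, hm.mem 2 (by simp [h4]), hm.mem 3 (by simp [h4])],
      by simpa using he⟩
  have := hm.card_le_of_mem hS h4 hsub
    (by simp [hm.ne (z := 0) (z' := 2) (by omega) (by omega) (by omega),
      hm.ne (z := 0) (z' := 3) (by omega) (by omega) (by omega)]) (by simp) (by simp)
  rw [Finset.card_singleton, Finset.card_pair h23] at this
  omega

theorem zero_notMem_edge (hm : IsAdmissibleMarking V E k m) (h4 : k = 4) :
    m 0 ∉ s(m 2, m 3) := by
  rw [Sym2.mem_iff, not_or]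
  exact ⟨hm.ne (by omega) (by omega) (by omega), hm.ne (by omega) (by omega) (by omega)⟩

theorem edgesAt_eq_of_restoresEdge (hm : IsAdmissibleMarking V E k m) (hS : IsSparse V E)
    (hD : IsMaxTightDecomp V E Vi Ei) {i : I} (h : RestoresEdge Vi k m i) :
    edgesAt (Ei i) (m 0) = edgesAt E (m 0) := by
  refine (edgesAt_mono (hD.1 i).1.2.2 _).antisymm fun e he => ?_
  have heE := (Finset.mem_filter.1 he).1
  rw [hm.edgesAt_eq] at he
  obtain ⟨z, hz, rfl⟩ := Finset.mem_image.1 he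
  obtain ⟨hz0, hzk⟩ := Finset.mem_erase.1 hz
  rw [Finset.mem_range] at hzk
  have h2 : 2 ≤ (Vi i).card := Finset.one_lt_card.2
    ⟨_, h.mem (by omega), _, h.mem hzk, hm.ne (by omega) hzk (Ne.symm hz0)⟩
  refine Finset.mem_filter.2 ⟨hS.mem_of_isTight (hD.1 i).1 (hD.1 i).2.1 h2 heE fun u hu => ?_,
    Sym2.mem_mk_left _ _⟩
  rcases Sym2.mem_iff.1 hu with rfl | rfl
  exacts [h.mem (by omega), h.mem hzk]

theorem restoresEdge_of_card_edgesAt (hm : IsAdmissibleMarking V E k m)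
    (hD : IsMaxTightDecomp V E Vi Ei) {i : I} (h3 : (edgesAt (Ei i) (m 0)).card = 3) :
    RestoresEdge Vi k m i := by
  have hsub := edgesAt_mono (hD.1 i).1.2.2 (m 0)
  have hle := Finset.card_le_card hsub
  rw [hm.card_edgesAt] at hle
  have h4 : k = 4 := by have := hm.le_four; omega
  have heq := Finset.eq_of_subset_of_card_le hsub (by rw [hm.card_edgesAt]; omega)
  have hedge : ∀ z, 1 ≤ z → z < k → s(m 0, m z) ∈ Ei i := fun z h1 hz =>
    (Finset.mem_filter.1 (heq ▸ hm.mem_edgesAt h1 hz)).1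
  refine ⟨h4, Finset.image_subset_iff.2 fun z hz => ?_⟩
  rw [Finset.mem_range] at hz
  rcases Nat.eq_zero_or_pos z with rfl | hz0
  · exact (hD.1 i).1.1.mem_of_mem (hedge 1 le_rfl (by omega)) (Sym2.mem_mk_left _ _)
  · exact (hD.1 i).1.1.mem_of_mem (hedge z hz0 hz) (Sym2.mem_mk_right _ _)

theorem card_edgesAt_of_restoresEdge (hm : IsAdmissibleMarking V E k m) (hS : IsSparse V E)
    (hD : IsMaxTightDecomp V E Vi Ei) {i : I} (h : RestoresEdge Vi k m i) :
    (edgesAt (Ei i) (m 0)).card = 3 := by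
  rw [hm.edgesAt_eq_of_restoresEdge hS hD h, hm.card_edgesAt, h.1]

theorem card_edgesAt_of_not_restoresEdge (hm : IsAdmissibleMarking V E k m)
    (hD : IsMaxTightDecomp V E Vi Ei) {i : I} (hi : inIm Vi Ei m i) (h0 : m 0 ∈ Vi i)
    (h : ¬ RestoresEdge Vi k m i) : (edgesAt (Ei i) (m 0)).card = 2 := by
  have h2 := (hD.1 i).2.1.two_le_card_edgesAt h0 (three_le_card_of_inIm hD hi h0)
  have hle := Finset.card_le_card (edgesAt_mono (hD.1 i).1.2.2 (m 0))
  rw [hm.card_edgesAt] at hle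
  have h3 : (edgesAt (Ei i) (m 0)).card ≠ 3 := fun h3 => h (hm.restoresEdge_of_card_edgesAt hD h3)
  have := hm.le_four
  omega

theorem inIm_of_restoresEdge (hm : IsAdmissibleMarking V E k m) (hS : IsSparse V E)
    (hD : IsMaxTightDecomp V E Vi Ei) {i : I} (h : RestoresEdge Vi k m i) : inIm Vi Ei m i := by
  have h4 := h.1
  refine ⟨fun h0 => hm.ne (z := 1) (z' := 0) (by omega) (by omega) (by omega) ?_, ?_⟩
  · exact Finset.mem_singleton.1 (h0 ▸ h.mem (by omega))
  · rw [hm.card_edgesAt_of_restoresEdge hS hD h]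
    omega

theorem mem_Em (hm : IsAdmissibleMarking V E k m) {i : I} {e : Sym2 α}
    (he : e ∈ Em Vi Ei k m i) :
    m 0 ∉ e ∧ (e ∈ Ei i ∨ RestoresEdge Vi k m i ∧ e = s(m 2, m 3)) := by
  by_cases h : RestoresEdge Vi k m i
  · rw [Em_of_restoresEdge h, Finset.mem_insert, Finset.mem_filter] at he
    rcases he with rfl | ⟨he, h0⟩
    · exact ⟨hm.zero_notMem_edge h.1, Or.inr ⟨h, rfl⟩⟩
    · exact ⟨h0, Or.inl he⟩
  · rw [Em_of_not_restoresEdge h, Finset.mem_filter] at he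
    exact ⟨he.2, Or.inl he.1⟩

theorem isGraph_Em (hm : IsAdmissibleMarking V E k m) (hD : IsMaxTightDecomp V E Vi Ei)
    (i : I) : IsGraph (Vm Vi m i) (Em Vi Ei k m i) := by
  intro e he
  obtain ⟨h0, he | ⟨h, rfl⟩⟩ := hm.mem_Em he
  · exact ⟨((hD.1 i).1.1 e he).1, fun v hv =>
      Finset.mem_erase.2 ⟨fun hv0 => h0 (hv0 ▸ hv), (hD.1 i).1.1.mem_of_mem he hv⟩⟩
  · have h4 := h.1
    refine ⟨by simpa using hm.ne (z := 2) (z' := 3) (by omega) (by omega) (by omega),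
      fun v hv => ?_⟩
    rcases Sym2.mem_iff.1 hv with rfl | rfl
    · exact Finset.mem_erase.2 ⟨hm.ne (by omega) (by omega) (by omega), h.mem (by omega)⟩
    · exact Finset.mem_erase.2 ⟨hm.ne (by omega) (by omega) (by omega), h.mem (by omega)⟩

theorem card_Em_add_two (hm : IsAdmissibleMarking V E k m) (hS : IsSparse V E)
    (hD : IsMaxTightDecomp V E Vi Ei) {i : I} (hi : inIm Vi Ei m i) (h0 : m 0 ∈ Vi i) :
    (Em Vi Ei k m i).card + 2 = (Ei i).card := by
  rw [← card_filter_add_card_edgesAt (Ei i) (m 0)]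
  by_cases h : RestoresEdge Vi k m i
  · rw [Em_of_restoresEdge h, Finset.card_insert_of_notMem
      fun he => hm.edge_notMem hS h.1 ((hD.1 i).1.2.2 (Finset.mem_filter.1 he).1),
      hm.card_edgesAt_of_restoresEdge hS hD h]
  · rw [Em_of_not_restoresEdge h, hm.card_edgesAt_of_not_restoresEdge hD hi h0 h]

theorem is1Ext (hm : IsAdmissibleMarking V E k m) (hS : IsSparse V E)
    (hD : IsMaxTightDecomp V E Vi Ei) {i : I} (h : RestoresEdge Vi k m i) :
    Is1Ext (Vi i) (Ei i) (Vm Vi m i) (Em Vi Ei k m i) (m 0) (m 2) (m 3) := by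
  have h4 := h.1
  have hmem : ∀ z, 1 ≤ z → z < 4 → m z ∈ Vm Vi m i := fun z h1 hz =>
    Finset.mem_erase.2 ⟨hm.ne (by omega) (by omega) (by omega), h.mem (by omega)⟩
  have hnot : s(m 2, m 3) ∉ (Ei i).filter (fun e => m 0 ∉ e) :=
    fun he => hm.edge_notMem hS h4 ((hD.1 i).1.2.2 (Finset.mem_filter.1 he).1)
  refine ⟨m 1, Finset.notMem_erase _ _, hmem 1 le_rfl (by omega), hmem 2 (by omega) (by omega),
    hmem 3 (by omega) (by omega), hm.ne (by omega) (by omega) (by omega),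
    hm.ne (by omega) (by omega) (by omega), hm.ne (by omega) (by omega) (by omega),
    by rw [Em_of_restoresEdge h]; exact Finset.mem_insert_self _ _,
    (Finset.insert_erase (h.mem (by omega))).symm, ?_⟩
  rw [Em_of_restoresEdge h, Finset.erase_insert hnot, ← hm.edgesAt_eq_of_four h4,
    ← hm.edgesAt_eq_of_restoresEdge hS hD h, filter_union_edgesAt]

end IsAdmissibleMarking

variable [Fintype I]

theorem mem_redV {v : α} : v ∈ redV Vi Ei m ↔ ∃ i, inIm Vi Ei m i ∧ v ∈ Vm Vi m i := by
  simp [redV]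

theorem mem_redE {e : Sym2 α} :
    e ∈ redE Vi Ei k m ↔ ∃ i, inIm Vi Ei m i ∧ e ∈ Em Vi Ei k m i := by
  simp [redE]

theorem redV_subset (hD : IsMaxTightDecomp V E Vi Ei) : redV Vi Ei m ⊆ V.erase (m 0) :=
  fun _ hv => by
    obtain ⟨i, -, hv⟩ := mem_redV.1 hv
    exact Finset.erase_subset_erase _ (hD.1 i).1.2.1 hv

namespace IsAdmissibleMarking

theorem mem_of_mem_redE (hm : IsAdmissibleMarking V E k m) (hD : IsMaxTightDecomp V E Vi Ei)
    {e : Sym2 α} (he : e ∈ redE Vi Ei k m) : m 0 ∉ e ∧ (e ∈ E ∨ k = 4 ∧ e = s(m 2, m 3)) := by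
  obtain ⟨i, -, he⟩ := mem_redE.1 he
  obtain ⟨h0, he | ⟨h, rfl⟩⟩ := hm.mem_Em he
  exacts [⟨h0, Or.inl ((hD.1 i).1.2.2 he)⟩, ⟨h0, Or.inr ⟨h.1, rfl⟩⟩]

theorem isSubgraph_redV (hm : IsAdmissibleMarking V E k m) (hD : IsMaxTightDecomp V E Vi Ei)
    {i : I} (hi : inIm Vi Ei m i) :
    IsSubgraph (Vm Vi m i) (Em Vi Ei k m i) (redV Vi Ei m) (redE Vi Ei k m) :=
  ⟨hm.isGraph_Em hD i, fun _ hv => mem_redV.2 ⟨i, hi, hv⟩, fun _ he => mem_redE.2 ⟨i, hi, he⟩⟩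

theorem isSparse_redV (hm : IsAdmissibleMarking V E k m) (hS : IsSparse V E)
    (hD : IsMaxTightDecomp V E Vi Ei) : IsSparse (redV Vi Ei m) (redE Vi Ei k m) := by
  refine ⟨fun e he => ?_, fun W F hW hW2 => ?_⟩
  · obtain ⟨i, hi, he⟩ := mem_redE.1 he
    exact ⟨(hm.isGraph_Em hD i e he).1,
      fun v hv => (hm.isSubgraph_redV hD hi).2.1 ((hm.isGraph_Em hD i).mem_of_mem he hv)⟩
  have hWV : W ⊆ V.erase (m 0) := hW.2.1.trans (redV_subset hD)
  by_cases hF : F ⊆ E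
  · exact hS.2 W F ⟨hW.1, hWV.trans (Finset.erase_subset _ _), hF⟩ hW2
  obtain ⟨e, heF, heE⟩ := Finset.not_subset.1 hF
  obtain ⟨h4, rfl⟩ := (hm.mem_of_mem_redE hD (hW.2.2 heF)).2.resolve_left heE
  -- without `{m 2, m 3}` this is a subgraph of `G - m 0` through `m 2, m 3`
  have hsub : IsSubgraph W (F.erase s(m 2, m 3)) V E :=
    ⟨fun e he => hW.1 e (Finset.mem_of_mem_erase he), hWV.trans (Finset.erase_subset _ _),
      fun e he => (hm.mem_of_mem_redE hD (hW.2.2 (Finset.mem_of_mem_erase he))).2.resolve_right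
        fun h => (Finset.mem_erase.1 he).1 h.2⟩
  have := hm.card_le_of_mem hS h4 hsub (fun h => Finset.notMem_erase _ _ (hWV h))
    (hW.1.mem_of_mem heF (Sym2.mem_mk_left _ _)) (hW.1.mem_of_mem heF (Sym2.mem_mk_right _ _))
  rw [Finset.card_erase_of_mem heF, Nat.cast_sub (Finset.card_pos.2 ⟨_, heF⟩)] at this
  omega

theorem isTight_Em (hm : IsAdmissibleMarking V E k m) (hS : IsSparse V E)
    (hD : IsMaxTightDecomp V E Vi Ei) {i : I} (hi : inIm Vi Ei m i) :
    IsTight (Vm Vi m i) (Em Vi Ei k m i) := by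
  by_cases h0 : m 0 ∈ Vi i
  · have h3 := three_le_card_of_inIm hD hi h0
    refine (hm.isSparse_redV hS hD).isTight (hm.isSubgraph_redV hD hi) ?_
    have := (hD.1 i).2.1.card_eq (by omega)
    have := hm.card_Em_add_two hS hD hi h0
    rw [Vm, Finset.card_erase_of_mem h0, Nat.cast_sub (by omega)]
    omega
  · obtain ⟨hV, hE⟩ := Vm_Em_of_notMem (k := k) (Ei := Ei) hD h0
    rw [hV, hE]
    exact (hD.1 i).2.1

theorem eq_of_restoresEdge_of_isTight (hm : IsAdmissibleMarking V E k m) (hS : IsSparse V E)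
    (hD : IsMaxTightDecomp V E Vi Ei) {i : I} (h : RestoresEdge Vi k m i) {W : Finset α}
    {F : Finset (Sym2 α)} (hW : IsSubgraph W F (redV Vi Ei m) (redE Vi Ei k m))
    (ht : IsTight W F) (hVW : Vm Vi m i ⊆ W) (hEF : Em Vi Ei k m i ⊆ F) :
    Vm Vi m i = W ∧ Em Vi Ei k m i = F := by
  have h4 := h.1
  have hWV : W ⊆ V.erase (m 0) := hW.2.1.trans (redV_subset hD)
  have h0W : m 0 ∉ W := fun h0 => Finset.notMem_erase _ _ (hWV h0)
  have hFm : ∀ e ∈ F, m 0 ∉ e ∧ (e ∈ E ∨ k = 4 ∧ e = s(m 2, m 3)) :=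
    fun e he => hm.mem_of_mem_redE hD (hW.2.2 he)
  have h23 : s(m 2, m 3) ∈ F := hEF (by rw [Em_of_restoresEdge h]; exact Finset.mem_insert_self _ _)
  have hmW : ∀ z, 1 ≤ z → z < k → m z ∈ W := fun z h1 hz =>
    hVW (Finset.mem_erase.2 ⟨hm.ne hz (by omega) (by omega), h.mem hz⟩)
  have hW2 : 2 ≤ W.card :=
    Finset.one_lt_card.2 ⟨_, hmW 2 (by omega) (by omega), _, hmW 3 (by omega) (by omega),
      hm.ne (by omega) (by omega) (by omega)⟩
  have hsub : IsSubgraph W (F.erase s(m 2, m 3)) V E :=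
    ⟨fun e he => hW.1 e (Finset.mem_of_mem_erase he), hWV.trans (Finset.erase_subset _ _),
      fun e he => (hFm e (Finset.mem_of_mem_erase he)).2.resolve_right
        fun h' => (Finset.mem_erase.1 he).1 h'.2⟩
  -- lift by a 1-extension at `m 0`: trade `{m 2, m 3}` for the three edges at `m 0`
  obtain ⟨hL, tL⟩ := hS.isTight_insert hsub (hm.mem 0 (by simp [h4])) h0W
    (A := edgesAt E (m 0)) (Finset.filter_subset _ _) (fun e he => (Finset.mem_filter.1 he).2)
    (fun e he u hu => hm.mem_insert_of_mem_edgesAt hmW he hu) (by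
      rw [Finset.card_erase_of_mem h23, hm.card_edgesAt, h4,
        Nat.cast_sub (Finset.card_pos.2 ⟨_, h23⟩), ht.card_eq hW2]
      push_cast
      ring)
  have hEi : Ei i ⊆ F.erase s(m 2, m 3) ∪ edgesAt E (m 0) := by
    rw [← hm.edgesAt_eq_of_restoresEdge hS hD h]
    refine Finset.union_subset_union (fun e he => Finset.mem_erase.2 ⟨?_, ?_⟩) subset_rfl
      |>.trans' (filter_union_edgesAt (Ei i) (m 0)).ge
    · rintro rfl
      exact hm.edge_notMem hS h4 ((hD.1 i).1.2.2 (Finset.mem_filter.1 he).1)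
    · exact hEF (by rw [Em_of_restoresEdge h]; exact Finset.mem_insert_of_mem he)
  obtain ⟨hV, hE⟩ := (hD.1 i).2.2 _ _ hL tL (Vi_subset_insert hVW) hEi
  refine ⟨by rw [Vm, hV, Finset.erase_insert h0W], ?_⟩
  rw [Em_of_restoresEdge h, hE, filter_union_of_forall_mem (A := edgesAt E (m 0))
    (fun e he => (hFm e (Finset.mem_of_mem_erase he)).1) (fun e he => (Finset.mem_filter.1 he).2),
    Finset.insert_erase h23]

theorem eq_of_not_restoresEdge_of_isTight (hm : IsAdmissibleMarking V E k m)
    (hS : IsSparse V E) (hD : IsMaxTightDecomp V E Vi Ei) {i : I} (hi : inIm Vi Ei m i)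
    (h0 : m 0 ∈ Vi i) (h : ¬ RestoresEdge Vi k m i) {W : Finset α} {F : Finset (Sym2 α)}
    (hW : IsSubgraph W F (redV Vi Ei m) (redE Vi Ei k m)) (ht : IsTight W F) (hFE : F ⊆ E)
    (hVW : Vm Vi m i ⊆ W) (hEF : Em Vi Ei k m i ⊆ F) : Vm Vi m i = W ∧ Em Vi Ei k m i = F := by
  have hWV : W ⊆ V.erase (m 0) := hW.2.1.trans (redV_subset hD)
  have h0W : m 0 ∉ W := fun h0 => Finset.notMem_erase _ _ (hWV h0)
  have hW2 : 2 ≤ W.card := by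
    have := three_le_card_of_inIm hD hi h0
    have := Finset.card_le_card hVW
    rw [Vm, Finset.card_erase_of_mem h0] at this
    omega
  -- lift by a 0-extension: put back `m 0` with its two edges in `G_i`
  obtain ⟨hL, tL⟩ := hS.isTight_insert ⟨hW.1, hWV.trans (Finset.erase_subset _ _), hFE⟩
    ((hD.1 i).1.2.1 h0) h0W (A := edgesAt (Ei i) (m 0)) (edgesAt_mono (hD.1 i).1.2.2 _ |>.trans
      (Finset.filter_subset _ _))
    (fun e he => (Finset.mem_filter.1 he).2)
    (fun e he u hu => Vi_subset_insert hVW ((hD.1 i).1.1.mem_of_mem (Finset.mem_filter.1 he).1 hu))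
    (by rw [hm.card_edgesAt_of_not_restoresEdge hD hi h0 h, ht.card_eq hW2]; push_cast; ring)
  have hEi : Ei i ⊆ F ∪ edgesAt (Ei i) (m 0) := by
    rw [Em_of_not_restoresEdge h] at hEF
    exact (filter_union_edgesAt (Ei i) (m 0)).ge.trans (Finset.union_subset_union hEF subset_rfl)
  obtain ⟨hV, hE⟩ := (hD.1 i).2.2 _ _ hL tL (Vi_subset_insert hVW) hEi
  refine ⟨by rw [Vm, hV, Finset.erase_insert h0W], ?_⟩
  rw [Em_of_not_restoresEdge h, hE, filter_union_of_forall_mem (A := edgesAt (Ei i) (m 0))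
    (fun e he => (hm.mem_of_mem_redE hD (hW.2.2 he)).1) (fun e he => (Finset.mem_filter.1 he).2)]

theorem eq_of_isTight_of_edge_mem (hm : IsAdmissibleMarking V E k m) (hS : IsSparse V E)
    (hD : IsMaxTightDecomp V E Vi Ei) {i : I} (hi : inIm Vi Ei m i) {W : Finset α}
    {F : Finset (Sym2 α)} (hW : IsSubgraph W F (redV Vi Ei m) (redE Vi Ei k m))
    (ht : IsTight W F) (hW2 : 2 ≤ W.card) (hVW : Vm Vi m i ⊆ W) (hEF : Em Vi Ei k m i ⊆ F)
    (h4 : k = 4) (h23 : s(m 2, m 3) ∈ F) : Vm Vi m i = W ∧ Em Vi Ei k m i = F := by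
  -- glue `(W, F)` along `m 2, m 3` to the component that restored `{m 2, m 3}`, and lift
  obtain ⟨j, hj, hej⟩ := mem_redE.1 (hW.2.2 h23)
  have hrj : RestoresEdge Vi k m j :=
    ((hm.mem_Em hej).2.resolve_left fun he => hm.edge_notMem hS h4 ((hD.1 j).1.2.2 he)).1
  have hsubj := hm.isSubgraph_redV hD hj
  have h2W : 2 ≤ (W ∩ Vm Vi m j).card := Finset.one_lt_card.2
    ⟨m 2, Finset.mem_inter.2 ⟨ht.1.1.mem_of_mem h23 (Sym2.mem_mk_left _ _),
      (hm.isGraph_Em hD j).mem_of_mem hej (Sym2.mem_mk_left _ _)⟩,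
    m 3, Finset.mem_inter.2 ⟨ht.1.1.mem_of_mem h23 (Sym2.mem_mk_right _ _),
      (hm.isGraph_Em hD j).mem_of_mem hej (Sym2.mem_mk_right _ _)⟩,
    hm.ne (by omega) (by omega) (by omega)⟩
  have tU := (hm.isSparse_redV hS hD).isTight_union hW hsubj ht (hm.isTight_Em hS hD hj) h2W
  obtain ⟨hUV, hUE⟩ := hm.eq_of_restoresEdge_of_isTight hS hD hrj (hW.union hsubj) tU
    Finset.subset_union_right Finset.subset_union_right
  have hWj : W ⊆ Vm Vi m j := hUV ▸ Finset.subset_union_left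
  obtain rfl := eq_of_Vm_subset_Vm hS hD hi (hVW.trans hWj) (hW2.trans (Finset.card_le_card hWj))
  exact ⟨hVW.antisymm hWj, hEF.antisymm (hUE ▸ Finset.subset_union_left)⟩

theorem isMaxTight_Em (hm : IsAdmissibleMarking V E k m) (hS : IsSparse V E)
    (hD : IsMaxTightDecomp V E Vi Ei) {i : I} (hi : inIm Vi Ei m i) :
    IsMaxTight (Vm Vi m i) (Em Vi Ei k m i) (redV Vi Ei m) (redE Vi Ei k m) := by
  refine ⟨hm.isSubgraph_redV hD hi, hm.isTight_Em hS hD hi, fun W F hW ht hVW hEF => ?_⟩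
  rcases Nat.lt_or_ge W.card 2 with hW1 | hW2
  · have hF := ht.1.1.eq_empty_of_card_le_one (by omega)
    have := (Vm_nonempty hD hi).card_pos
    exact ⟨Finset.eq_of_subset_of_card_le hVW (by omega),
      Finset.subset_empty.1 (hF ▸ hEF) |>.trans hF.symm⟩
  by_cases h23 : k = 4 ∧ s(m 2, m 3) ∈ F
  · exact hm.eq_of_isTight_of_edge_mem hS hD hi hW ht hW2 hVW hEF h23.1 h23.2
  have hFE : F ⊆ E := fun e he => (hm.mem_of_mem_redE hD (hW.2.2 he)).2.resolve_right
    fun h' => h23 ⟨h'.1, h'.2 ▸ he⟩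
  by_cases h0 : m 0 ∈ Vi i
  · refine hm.eq_of_not_restoresEdge_of_isTight hS hD hi h0 (fun hr => h23 ⟨hr.1, hEF ?_⟩) hW ht
      hFE hVW hEF
    rw [Em_of_restoresEdge hr]
    exact Finset.mem_insert_self _ _
  · obtain ⟨hV, hE⟩ := Vm_Em_of_notMem (k := k) (Ei := Ei) hD h0
    rw [hV] at hVW ⊢
    rw [hE] at hEF ⊢
    exact (hD.1 i).2.2 W F ⟨hW.1, hW.2.1.trans (redV_subset hD) |>.trans
      (Finset.erase_subset _ _), hFE⟩ ht hVW hEF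

theorem isMarking (hm : IsAdmissibleMarking V E k m) (hS : IsSparse V E)
    (hD : IsMaxTightDecomp V E Vi Ei) (hV : 1 < V.card) : IsMarking V E Vi Ei k m :=
  ⟨hm.one_le, hm.le_four, hV, hm.mem, hm.injOn, hm.edgesAt_eq, fun _ h4 himg =>
    ⟨_, _, hm.isTight_Em hS hD (hm.inIm_of_restoresEdge hS hD ⟨h4, himg⟩),
      hm.is1Ext hS hD ⟨h4, himg⟩⟩⟩

theorem isMaxTightDecomp_redV (hm : IsAdmissibleMarking V E k m) (hS : IsSparse V E)
    (hD : IsMaxTightDecomp V E Vi Ei) :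
    IsMaxTightDecomp (redV Vi Ei m) (redE Vi Ei k m)
      (fun i : {i : I // inIm Vi Ei m i} => Vm Vi m i.1)
      (fun i : {i : I // inIm Vi Ei m i} => Em Vi Ei k m i.1) := by
  refine ⟨fun i => hm.isMaxTight_Em hS hD i.2, fun v hv => ?_, fun e he => ?_,
    fun i j hij e he => ?_⟩
  · obtain ⟨i, hi, hv⟩ := mem_redV.1 hv
    exact ⟨⟨i, hi⟩, hv⟩
  · obtain ⟨i, hi, he⟩ := mem_redE.1 he
    exact ⟨⟨i, hi⟩, he⟩
  · -- the restored edge `{m 2, m 3}` can only be shared by components through `m 0` and `m 1`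
    obtain ⟨hei, hej⟩ := he
    rcases (hm.mem_Em hei).2 with hei | ⟨hri, rfl⟩
    · rcases (hm.mem_Em hej).2 with hej | ⟨hrj, rfl⟩
      · exact hD.2.2.2 i j (fun h => hij (Subtype.ext h)) e ⟨hei, hej⟩
      · exact hm.edge_notMem hS hrj.1 ((hD.1 i).1.2.2 hei)
    rcases (hm.mem_Em hej).2 with hej | ⟨hrj, -⟩
    · exact hm.edge_notMem hS hri.1 ((hD.1 j).1.2.2 hej)
    have h4 := hri.1
    exact hij (Subtype.ext (hD.eq_of_mem_of_mem hS (hm.ne (z := 0) (z' := 1) (by omega) (by omega)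
      (by omega)) (hri.mem (by omega)) (hri.mem (by omega)) (hrj.mem (by omega))
      (hrj.mem (by omega))))

end IsAdmissibleMarking

end Reduction

noncomputable section

open scoped Classical

variable {α : Type*} [DecidableEq α]

/-- Every sparse graph with more than one vertex admits a
marking `m` such that the reduced graph `G^m` is sparse and
`{G_i^m}_{i ∈ I^m}` is a max-tight decomposition for `G^m`. -/
theorem exists_marking_with_sparse_reduced_graph
    {I : Type*} [Fintype I]
    (V : Finset α) (E : Finset (Sym2 α))
    (Vi : I → Finset α) (Ei : I → Finset (Sym2 α))
    (hSparse : IsSparse V E) (hV : 1 < V.card)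
    (hDecomp : IsMaxTightDecomp V E Vi Ei) :
    ∃ (k : ℕ) (m : ℕ → α), IsMarking V E Vi Ei k m ∧
      IsSparse (redV Vi Ei m) (redE Vi Ei k m) ∧
      IsMaxTightDecomp (redV Vi Ei m) (redE Vi Ei k m)
        (fun i : {i : I // inIm Vi Ei m i} => Vm Vi m i.1)
        (fun i : {i : I // inIm Vi Ei m i} => Em Vi Ei k m i.1) := by
  obtain ⟨v, hv, hdeg⟩ := hSparse.exists_card_edgesAt_le_three hV
  obtain ⟨ws, hws, hnd, hlen, hE, hunbl⟩ := hSparse.exists_neighbor_list hdeg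
  have hm := isAdmissibleMarking_of_list hv hws hnd hlen hE hunbl
  exact ⟨_, _, hm.isMarking hSparse hDecomp hV, hm.isSparse_redV hSparse hDecomp,
    hm.isMaxTightDecomp_redV hSparse hDecomp⟩

end
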